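/- Let α > 0 and β ∈ (−1, 0) be real numbers, and define f(x) = (α + βx)/(1 − e^{−x}) + x for x > 0. Then f(x) → ∞ as x → 0⁺ and f(x) → ∞ as x → ∞, f attains a global minimum at a unique point x* ∈ (0, ∞), and f is strictly increasing on (x*, ∞). -/

import Mathlib

/-!
Writing `f x = (α + β x) / (1 - e⁻ˣ) + x`, one computes
`f' x = e⁻ˣ P x / (1 - e⁻ˣ)²` with `P x = (1 + β) eˣ + e⁻ˣ - β x - α - β - 2`.
Since `P' x = (eˣ - 1)(1 + β + e⁻ˣ) > 0` for `x > 0`, `P` is strictly increasing on `[0, ∞)`,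
from `P 0 = -α < 0` to positive values, so it has exactly one zero `x*` there. Hence `f`
strictly decreases on `(0, x*]` and strictly increases on `[x*, ∞)`.
-/

open Filter Real Set Topology

noncomputable def delay (α β x : ℝ) : ℝ := (α + β * x) / (1 - exp (-x)) + x

noncomputable def delayDerivNum (α β x : ℝ) : ℝ :=
  (1 + β) * exp x + exp (-x) - β * x - α - β - 2

lemma one_sub_exp_neg_pos {x : ℝ} (hx : 0 < x) : 0 < 1 - exp (-x) :=
  sub_pos.2 (exp_lt_one_iff.2 (neg_neg_of_pos hx))

lemma hasDerivAt_delayDerivNum (α β x : ℝ) :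
    HasDerivAt (delayDerivNum α β) ((exp x - 1) * (1 + β + exp (-x))) x := by
  have h := (((((hasDerivAt_exp x).const_mul (1 + β)).add (hasDerivAt_neg x).exp).sub
    ((hasDerivAt_id x).const_mul β)).sub_const α).sub_const β |>.sub_const 2
  refine h.congr_deriv ?_
  rw [exp_neg]
  field_simp
  ring

lemma delayDerivNum_zero (α β : ℝ) : delayDerivNum α β 0 = -α := by
  simp only [delayDerivNum, neg_zero, exp_zero, mul_zero]
  ring

lemma strictMonoOn_delayDerivNum (α : ℝ) {β : ℝ} (hβ : -1 < β) :
    StrictMonoOn (delayDerivNum α β) (Ici 0) := by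
  refine strictMonoOn_of_hasDerivWithinAt_pos (convex_Ici 0)
    (fun x _ => (hasDerivAt_delayDerivNum α β x).continuousAt.continuousWithinAt)
    (fun x _ => (hasDerivAt_delayDerivNum α β x).hasDerivWithinAt) fun x hx => ?_
  rw [interior_Ici] at hx
  exact mul_pos (sub_pos.2 (one_lt_exp_iff.2 hx)) (by linarith [exp_pos (-x)])

lemma delayDerivNum_add_one_pos {α β : ℝ} (hα : 0 < α) (hβ : -1 < β) :
    0 < delayDerivNum α β (α + 1) := by
  have := quadratic_le_exp_of_nonneg (by linarith : 0 ≤ α + 1)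
  unfold delayDerivNum
  nlinarith [exp_pos (-(α + 1)), sq_nonneg (α + 1)]

lemma hasDerivAt_delay (α β : ℝ) {x : ℝ} (hx : 0 < x) :
    HasDerivAt (delay α β) (exp (-x) * delayDerivNum α β x / (1 - exp (-x)) ^ 2) x := by
  have hden : HasDerivAt (fun x => 1 - exp (-x)) (exp (-x)) x := by
    simpa using ((hasDerivAt_neg x).exp).const_sub 1
  have hnum : HasDerivAt (fun x => α + β * x) β x := by
    simpa using ((hasDerivAt_id x).const_mul β).const_add α
  refine ((hnum.div hden (one_sub_exp_neg_pos hx).ne').add (hasDerivAt_id x)).congr_deriv ?_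
  have := (one_sub_exp_neg_pos hx).ne'
  rw [delayDerivNum, show exp x = (exp (-x))⁻¹ by rw [exp_neg, inv_inv]]
  field_simp
  ring

lemma exists_delayDerivNum_eq_zero {α β : ℝ} (hα : 0 < α) (hβ : -1 < β) :
    ∃ c, 0 < c ∧ delayDerivNum α β c = 0 := by
  have hcont : ContinuousOn (delayDerivNum α β) (Icc 0 (α + 1)) := fun x _ =>
    (hasDerivAt_delayDerivNum α β x).continuousAt.continuousWithinAt
  obtain ⟨c, hc, hc0⟩ := intermediate_value_Ioo (by linarith) hcont
    ⟨by rw [delayDerivNum_zero]; linarith, delayDerivNum_add_one_pos hα hβ⟩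
  exact ⟨c, hc.1, hc0⟩

lemma tendsto_delay_nhdsGT_zero {α : ℝ} (β : ℝ) (hα : 0 < α) :
    Tendsto (delay α β) (𝓝[>] 0) atTop := by
  have hnum : Tendsto (fun x : ℝ => α + β * x) (𝓝[>] 0) (𝓝 α) := by
    exact ((by fun_prop : Continuous fun x : ℝ => α + β * x).tendsto' 0 α (by simp)).mono_left
      nhdsWithin_le_nhds
  have hden : Tendsto (fun x : ℝ => 1 - exp (-x)) (𝓝[>] 0) (𝓝[>] 0) := by
    refine tendsto_nhdsWithin_iff.2 ⟨?_, eventually_mem_nhdsWithin.mono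
      fun x hx => one_sub_exp_neg_pos hx⟩
    exact ((by fun_prop : Continuous fun x : ℝ => 1 - exp (-x)).tendsto' 0 0 (by simp)).mono_left
      nhdsWithin_le_nhds
  have hratio := hnum.pos_mul_atTop hα (tendsto_inv_nhdsGT_zero.comp hden)
  exact hratio.atTop_add (tendsto_nhdsWithin_of_tendsto_nhds tendsto_id)

/-- `f x = α + (1 + β) x + (α + β x) e⁻ˣ / (1 - e⁻ˣ)`, and the last term tends to `0`. -/
lemma tendsto_delay_atTop (α : ℝ) {β : ℝ} (hβ : -1 < β) :
    Tendsto (delay α β) atTop atTop := by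
  have hdecay : Tendsto (fun x => (α * exp (-x) + β * (x * exp (-x))) / (1 - exp (-x)))
      atTop (𝓝 0) := by
    have h0 := tendsto_exp_neg_atTop_nhds_zero
    have h1 : Tendsto (fun x : ℝ => x * exp (-x)) atTop (𝓝 0) := by
      simpa using tendsto_pow_mul_exp_neg_atTop_nhds_zero 1
    rw [show (0 : ℝ) = (α * 0 + β * 0) / (1 - 0) by simp]
    exact ((h0.const_mul α).add (h1.const_mul β)).div (h0.const_sub 1) (by norm_num)
  have hlin : Tendsto (fun x : ℝ => (1 + β) * x) atTop atTop :=
    tendsto_id.const_mul_atTop (by linarith)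
  refine (hlin.atTop_add (hdecay.const_add α)).congr' ?_
  filter_upwards [eventually_gt_atTop 0] with x hx
  have := (one_sub_exp_neg_pos hx).ne'
  rw [delay]
  field_simp
  ring

lemma StrictAntiOn.lt_of_strictMonoOn {α β : Type*} [LinearOrder α] [Preorder β]
    {f : α → β} {a c y : α} (hanti : StrictAntiOn f (Ioc a c)) (hmono : StrictMonoOn f (Ici c))
    (hy : a < y) (hyc : y ≠ c) : f c < f y := by
  rcases hyc.lt_or_gt with h | h
  · exact hanti ⟨hy, h.le⟩ ⟨hy.trans h, le_rfl⟩ h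
  · exact hmono le_rfl h.le h

lemma strictAntiOn_delay {α β c : ℝ} (hβ : -1 < β) (hc : delayDerivNum α β c = 0) :
    StrictAntiOn (delay α β) (Ioc 0 c) := by
  refine strictAntiOn_of_hasDerivWithinAt_neg (convex_Ioc 0 c)
    (fun x hx => (hasDerivAt_delay α β hx.1).continuousAt.continuousWithinAt)
    (fun x hx => (hasDerivAt_delay α β (interior_subset hx).1).hasDerivWithinAt) fun x hx => ?_
  rw [interior_Ioc] at hx
  have hneg : delayDerivNum α β x < 0 :=
    hc ▸ strictMonoOn_delayDerivNum α hβ hx.1.le (hx.1.trans hx.2).le hx.2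
  exact div_neg_of_neg_of_pos (mul_neg_of_pos_of_neg (exp_pos _) hneg)
    (pow_pos (one_sub_exp_neg_pos hx.1) 2)

lemma strictMonoOn_delay {α β c : ℝ} (hβ : -1 < β) (hc₀ : 0 < c)
    (hc : delayDerivNum α β c = 0) : StrictMonoOn (delay α β) (Ici c) := by
  refine strictMonoOn_of_hasDerivWithinAt_pos (convex_Ici c)
    (fun x hx => (hasDerivAt_delay α β (hc₀.trans_le hx)).continuousAt.continuousWithinAt)
    (fun x hx => (hasDerivAt_delay α β (hc₀.trans_le (interior_subset hx))).hasDerivWithinAt)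
    fun x hx => ?_
  rw [interior_Ici] at hx
  have hpos : 0 < delayDerivNum α β x :=
    hc ▸ strictMonoOn_delayDerivNum α hβ hc₀.le (hc₀.trans hx).le hx
  exact div_pos (mul_pos (exp_pos _) hpos) (pow_pos (one_sub_exp_neg_pos (hc₀.trans hx)) 2)

/-- For `α > 0` and `β ∈ (-1, 0)`, the function `f(x) = (α + βx)/(1 - e^{-x}) + x`
tends to `∞` as `x → 0⁺` and as `x → ∞`, attains a global minimum on `(0, ∞)` at a
unique point `x*`, and is strictly increasing on `(x*, ∞)`. -/
theorem stmt_7 (α β : ℝ) (hα : 0 < α) (hβ : β ∈ Set.Ioo (-1 : ℝ) 0) :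
    Tendsto (fun x : ℝ => (α + β * x) / (1 - Real.exp (-x)) + x)
      (nhdsWithin 0 (Set.Ioi 0)) atTop ∧
    Tendsto (fun x : ℝ => (α + β * x) / (1 - Real.exp (-x)) + x) atTop atTop ∧
    ∃ xstar : ℝ, 0 < xstar ∧
      IsMinOn (fun x : ℝ => (α + β * x) / (1 - Real.exp (-x)) + x)
        (Set.Ioi 0) xstar ∧
      (∀ y : ℝ, 0 < y →
        IsMinOn (fun x : ℝ => (α + β * x) / (1 - Real.exp (-x)) + x) (Set.Ioi 0) y →
        y = xstar) ∧
      StrictMonoOn (fun x : ℝ => (α + β * x) / (1 - Real.exp (-x)) + x)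
        (Set.Ioi xstar) := by
  obtain ⟨hβ, -⟩ := hβ
  obtain ⟨c, hc₀, hc⟩ := exists_delayDerivNum_eq_zero hα hβ
  have hmono := strictMonoOn_delay hβ hc₀ hc
  have hlt : ∀ y, 0 < y → y ≠ c → delay α β c < delay α β y := fun _ hy hyc =>
    (strictAntiOn_delay hβ hc).lt_of_strictMonoOn hmono hy hyc
  refine ⟨tendsto_delay_nhdsGT_zero β hα, tendsto_delay_atTop α hβ, c, hc₀, isMinOn_iff.2 fun y hy => ?_,
    fun y hy hmin => ?_, hmono.mono Ioi_subset_Ici_self⟩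
  · rcases eq_or_ne y c with rfl | hyc
    exacts [le_rfl, (hlt y hy hyc).le]
  · by_contra hyc
    exact (hmin hc₀).not_gt (hlt y hy hyc)
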